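/- arXiv:1410.1049 — 2 statements merged into one kernel-verified Lean document; each statement's English description precedes it below -/
import Mathlib

section
/- (Sokhotskii-type limit on ℤ₊) Let u : ℤ → ℂ be absolutely summable with Fourier series û(t) = Σ_{k ∈ ℤ} u(k) e^{−ikt}. Then for every ξ ∈ ℝ, lim_{τ→0⁺} (1/(2π)) ∫_{−π}^{π} û(t) · (1 − e^{−τ} e^{−i(ξ−t)})^{−1} dt = Σ_{k=0}^{∞} u(k) e^{−ikξ}; that is, the regularized cotangent-kernel integral converges, as the regularization parameter tends to zero, to the Fourier transform F(χ_{ℤ₊} · u)(ξ) of the truncation of u to ℤ₊. -/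
open MeasureTheory Complex Real

/-- The Fourier series `û(t) = Σ_{k ∈ ℤ} u(k) e^{−ikt}` of a function of a discrete
variable. -/
noncomputable def discreteFourier (u : ℤ → ℂ) (t : ℝ) : ℂ :=
  ∑' k : ℤ, u k * Complex.exp (-Complex.I * (k : ℂ) * (t : ℂ))

/-! For `‖w‖ < 1` the kernel `(1 - w e^{-i(ξ-t)})⁻¹` is the geometric series
`Σ_{n ≥ 0} wⁿ e^{-in(ξ-t)}`. Multiplying by `û(t) = Σ_k u(k) e^{-ikt}` and integrating term by term
over `[-π, π]`, orthogonality of the characters `e^{imt}` keeps only the terms with `k = n`, so the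
regularized integral equals `2π Σ_{n ≥ 0} u(n) e^{-inξ} wⁿ`. With `w = e^{-τ}`, the limit `τ → 0⁺`
is the radial limit `w → 1⁻` of this power series, given by Abel's theorem. -/

open Filter Topology

lemma integral_cexp_I_int_mul (m : ℤ) :
    ∫ t in (-π)..π, cexp (I * m * t) = if m = 0 then (2 * π : ℂ) else 0 := by
  split_ifs with hm
  · simp [hm]
    ring
  have hIm : I * m ≠ 0 := mul_ne_zero I_ne_zero (Int.cast_ne_zero.mpr hm)
  have hperiod : cexp (I * m * π) = cexp (I * m * (-π : ℝ)) := by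
    rw [← mul_one (cexp (I * m * (-π : ℝ))), ← exp_int_mul_two_pi_mul_I m, ← Complex.exp_add]
    push_cast
    ring_nf
  rw [integral_exp_mul_complex hIm, hperiod, sub_self, zero_div]

lemma integral_tsum_mul_cexp_I_int_mul {ι : Type*} [Countable ι] {c : ι → ℂ}
    (hc : Summable fun i => ‖c i‖) (m : ι → ℤ) :
    ∫ t in (-π)..π, ∑' i, c i * cexp (I * m i * t) =
      2 * π * ∑' i, if m i = 0 then c i else 0 := by
  have hnorm : ∀ i (t : ℝ), ‖c i * cexp (I * m i * t)‖ = ‖c i‖ := fun i t => by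
    simp [Complex.norm_exp]
  have hsum := intervalIntegral.hasSum_integral_of_dominated_convergence (μ := volume)
    (a := -π) (b := π) (F := fun i t => c i * cexp (I * m i * t)) (fun i _ => ‖c i‖)
    (fun i => (by fun_prop : Continuous _).aestronglyMeasurable)
    (fun i => ae_of_all _ fun t _ => (hnorm i t).le)
    (ae_of_all _ fun _ _ => hc) intervalIntegrable_const
    (ae_of_all _ fun t _ => (hc.of_norm_bounded fun i => (hnorm i t).le).hasSum)
  rw [← hsum.tsum_eq, ← tsum_mul_left]
  refine tsum_congr fun i => ?_
  rw [intervalIntegral.integral_const_mul, integral_cexp_I_int_mul]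
  split_ifs <;> ring

lemma discreteFourier_mul_inv_one_sub_kernel {u : ℤ → ℂ} (hu : Summable fun k => ‖u k‖)
    {w : ℂ} (hw : ‖w‖ < 1) (ξ t : ℝ) :
    discreteFourier u t * (1 - w * cexp (-I * (ξ - t)))⁻¹ =
      ∑' p : ℤ × ℕ, u p.1 * cexp (-I * p.2 * ξ) * w ^ p.2 * cexp (I * (p.2 - p.1 : ℤ) * t) := by
  have hz : ‖w * cexp (-I * (ξ - t))‖ = ‖w‖ := by simp [Complex.norm_exp]
  rw [discreteFourier, ← tsum_geometric_of_norm_lt_one (hz ▸ hw),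
    tsum_mul_tsum_of_summable_norm (by simpa [Complex.norm_exp] using hu)
      (summable_norm_geometric_of_norm_lt_one (hz ▸ hw))]
  refine tsum_congr fun ⟨k, n⟩ => ?_
  have hexp : cexp (-I * k * t) * cexp (n * (-I * (ξ - t))) =
      cexp (-I * n * ξ) * cexp (I * (n - k : ℤ) * t) := by
    rw [← Complex.exp_add, ← Complex.exp_add]
    push_cast
    ring_nf
  simp only [mul_pow, ← Complex.exp_nat_mul]
  linear_combination (u k * w ^ n) * hexp

lemma integral_discreteFourier_mul_inv_one_sub_kernel {u : ℤ → ℂ}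
    (hu : Summable fun k => ‖u k‖) {w : ℂ} (hw : ‖w‖ < 1) (ξ : ℝ) :
    ∫ t in (-π)..π, discreteFourier u t * (1 - w * cexp (-I * (ξ - t)))⁻¹ =
      2 * π * ∑' n : ℕ, u n * cexp (-I * n * ξ) * w ^ n := by
  simp_rw [discreteFourier_mul_inv_one_sub_kernel hu hw ξ]
  have hc : Summable fun p : ℤ × ℕ => ‖u p.1 * cexp (-I * p.2 * ξ) * w ^ p.2‖ := by
    simpa [Complex.norm_exp] using
      hu.mul_of_nonneg (summable_geometric_of_lt_one (norm_nonneg w) hw)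
        (fun _ => norm_nonneg _) (fun n => pow_nonneg (norm_nonneg w) n)
  rw [integral_tsum_mul_cexp_I_int_mul hc]
  congr 1
  have hdiag : Function.Injective fun n : ℕ => ((n : ℤ), n) := fun a b h => by
    simpa using congrArg Prod.snd h
  rw [← hdiag.tsum_eq]
  · simp
  · rintro ⟨k, n⟩ hp
    obtain rfl : k = n := by
      by_contra hkn
      exact hp (if_neg (sub_ne_zero.mpr (Ne.symm hkn)))
    exact ⟨n, rfl⟩

lemma tendsto_exp_neg_nhdsGT_zero : Tendsto (fun τ => Real.exp (-τ)) (𝓝[>] 0) (𝓝[<] 1) := by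
  refine tendsto_nhdsWithin_iff.mpr ⟨?_, ?_⟩
  · simpa using ((by fun_prop : Continuous fun τ => Real.exp (-τ)).tendsto 0).mono_left
      nhdsWithin_le_nhds
  · filter_upwards [self_mem_nhdsWithin] with τ (hτ : 0 < τ)
    exact Real.exp_lt_one_iff.mpr (neg_lt_zero.mpr hτ)

theorem sokhotskii_limit_Zplus (u : ℤ → ℂ)
    (hu : Summable fun k : ℤ => ‖u k‖) (ξ : ℝ) :
    Filter.Tendsto
      (fun τ : ℝ => (1 / (2 * (Real.pi : ℂ))) *
        ∫ t in (-Real.pi)..Real.pi, discreteFourier u t *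
          (1 - (Real.exp (-τ) : ℂ) * Complex.exp (-Complex.I * ((ξ : ℂ) - (t : ℂ))))⁻¹)
      (nhdsWithin 0 (Set.Ioi 0))
      (nhds (∑' k : ℕ, u (k : ℤ) * Complex.exp (-Complex.I * (k : ℂ) * (ξ : ℂ)))) := by
  have hsum : Summable fun n : ℕ => ‖u n * cexp (-I * n * ξ)‖ := by
    refine (hu.comp_injective Nat.cast_injective).congr fun n => ?_
    simp [Complex.norm_exp]
  have habel := Complex.tendsto_tsum_powerSeries_nhdsWithin_lt hsum.of_norm.hasSum.tendsto_sum_nat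
  refine (habel.comp (tendsto_map.comp tendsto_exp_neg_nhdsGT_zero)).congr' ?_
  filter_upwards [self_mem_nhdsWithin] with τ (hτ : 0 < τ)
  have hw : ‖(Real.exp (-τ) : ℂ)‖ < 1 := by
    rw [Complex.norm_of_nonneg (Real.exp_nonneg _)]
    exact Real.exp_lt_one_iff.mpr (neg_lt_zero.mpr hτ)
  rw [integral_discreteFourier_mul_inv_one_sub_kernel hu hw ξ, ← mul_assoc, one_div,
    inv_mul_cancel₀ (by simp [Real.pi_ne_zero]), one_mul]
  rfl
end

section
/- (Sokhotskii-type limit on ℤ₋) Let u : ℤ → ℂ be absolutely summable with Fourier series û(t) = Σ_{k ∈ ℤ} u(k) e^{−ikt}. Then for every ξ ∈ ℝ, lim_{τ→0⁺} (1/(2π)) ∫_{−π}^{π} û(t) · [ (1 − e^{−τ} e^{i(ξ−t)})^{−1} − 1 ] dt = Σ_{k=−∞}^{−1} u(k) e^{−ikξ}; that is, the regularized integral converges, as the regularization parameter tends to zero, to the Fourier transform F(χ_{ℤ₋} · u)(ξ) of the truncation of u to the negative integers. -/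
open MeasureTheory Complex Real

/-! For `‖r‖ < 1` the kernel `(1 - r e^{i(ξ-t)})⁻¹ - 1` is the geometric series
`Σ_{n ≥ 1} rⁿ e^{in(ξ-t)}`, which only contains negative frequencies in `t`. Integrating it
termwise against `û` (everything converges absolutely) and using orthogonality of the
characters `e^{imt}` on `[-π, π]` turns the regularized integral into the Abel sum
`Σ_{n ≥ 1} rⁿ u(-n) e^{inξ}`. With `r = e^{-τ}`, Abel's theorem gives the limit as `τ → 0⁺`. -/

open Filter Topology

lemma tsum_subtype_int_lt_zero {α : Type*} [AddCommMonoid α] [TopologicalSpace α] (f : ℤ → α) :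
    ∑' k : {k : ℤ // k < 0}, f k = ∑' n : ℕ, f (Int.negSucc n) := by
  let e : ℕ ≃ {k : ℤ // k < 0} :=
    .ofBijective (fun n => ⟨Int.negSucc n, Int.negSucc_lt_zero n⟩)
      ⟨fun _ _ h => Int.negSucc.inj (congrArg Subtype.val h), fun ⟨_, hk⟩ =>
        (Int.eq_negSucc_of_lt_zero hk).imp fun _ hn => Subtype.ext hn.symm⟩
  exact (e.tsum_eq (fun k => f k)).symm

lemma hasSum_pow_succ_of_norm_lt_one {K : Type*} [NormedDivisionRing K] {w : K} (hw : ‖w‖ < 1) :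
    HasSum (fun n : ℕ => w ^ (n + 1)) ((1 - w)⁻¹ - 1) := by
  have := (hasSum_nat_add_iff' (f := (w ^ ·)) 1).mpr (hasSum_geometric_of_norm_lt_one hw)
  rwa [Finset.sum_range_one, pow_zero] at this

lemma integral_exp_I_int_mul (m : ℤ) :
    ∫ t in (-π)..π, exp (I * m * t) = if m = 0 then 2 * (π : ℂ) else 0 := by
  split_ifs with hm
  · simp [hm]
    ring
  · have hc : I * m ≠ 0 := mul_ne_zero I_ne_zero (Int.cast_ne_zero.mpr hm)
    -- the endpoint values agree because `exp (I * m * t)` is `2π`-periodic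
    have hperiodic : exp (I * m * π) = exp (I * m * ↑(-π)) := by
      rw [← mul_one (exp (I * m * ↑(-π))), ← exp_int_mul_two_pi_mul_I m, ← Complex.exp_add]
      push_cast
      ring_nf
    rw [integral_exp_mul_complex hc, hperiodic, sub_self, zero_div]

lemma intervalIntegral.hasSum_integral_of_norm_le {ι E : Type*} [Countable ι]
    [NormedAddCommGroup E] [NormedSpace ℝ E] {F : ι → ℝ → E} {f : ℝ → E} {c : ι → ℝ}
    {a b : ℝ} (hF : ∀ i, Continuous (F i)) (hFc : ∀ i t, ‖F i t‖ ≤ c i) (hc : Summable c)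
    (hf : ∀ t, HasSum (fun i => F i t) (f t)) :
    HasSum (fun i => ∫ t in a..b, F i t) (∫ t in a..b, f t) :=
  intervalIntegral.hasSum_integral_of_dominated_convergence (fun i _ => c i)
    (fun i => (hF i).aestronglyMeasurable) (fun i => ae_of_all _ fun t _ => hFc i t)
    (ae_of_all _ fun _ _ => hc) intervalIntegrable_const (ae_of_all _ fun t _ => hf t)

section discreteFourier

variable {u : ℤ → ℂ} (hu : Summable fun k => ‖u k‖)
include hu

lemma hasSum_discreteFourier (t : ℝ) :
    HasSum (fun k : ℤ => u k * exp (-I * k * t)) (discreteFourier u t) :=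
  Summable.hasSum <| .of_norm (by simpa [Complex.norm_exp] using hu)

lemma norm_discreteFourier_le (t : ℝ) : ‖discreteFourier u t‖ ≤ ∑' k, ‖u k‖ :=
  (norm_tsum_le_tsum_norm (by simpa [Complex.norm_exp] using hu)).trans_eq
    (by simp [Complex.norm_exp])

lemma continuous_discreteFourier : Continuous (discreteFourier u) :=
  continuous_tsum (fun k => by fun_prop) hu fun k t => by simp [Complex.norm_exp]

lemma integral_discreteFourier_mul_exp (m : ℤ) :
    ∫ t in (-π)..π, discreteFourier u t * exp (I * m * t) = 2 * π * u m := by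
  have hterm (k : ℤ) (t : ℝ) :
      u k * exp (-I * k * t) * exp (I * m * t) = u k * exp (I * (m - k : ℤ) * t) := by
    rw [mul_assoc, ← Complex.exp_add]
    push_cast
    ring_nf
  have hsum := intervalIntegral.hasSum_integral_of_norm_le (a := -π) (b := π)
    (F := fun k t => u k * exp (-I * k * t) * exp (I * m * t)) (by fun_prop)
    (fun k t => by simp [Complex.norm_exp]) hu
    (fun t => (hasSum_discreteFourier hu t).mul_right _)
  simp only [hterm, intervalIntegral.integral_const_mul, integral_exp_I_int_mul,
    sub_eq_zero] at hsum
  refine hsum.unique ((hasSum_ite_eq m (2 * π * u m)).congr_fun fun k => ?_)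
  rcases eq_or_ne k m with rfl | hkm
  · simp [mul_comm]
  · simp [hkm, hkm.symm]

lemma integral_discreteFourier_mul_cauchyKernel (r : ℂ) (hr : ‖r‖ < 1) (ξ : ℝ) :
    ∫ t in (-π)..π, discreteFourier u t * ((1 - r * exp (I * (ξ - t)))⁻¹ - 1) =
      2 * π * ∑' n : ℕ, r ^ (n + 1) * (u (Int.negSucc n) * exp (-I * Int.negSucc n * ξ)) := by
  have hnorm (t : ℝ) : ‖r * exp (I * (ξ - t))‖ = ‖r‖ := by
    simp [Complex.norm_exp]
  have hterm (n : ℕ) (t : ℝ) :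
      discreteFourier u t * (r * exp (I * (ξ - t))) ^ (n + 1) =
        r ^ (n + 1) * exp (-I * Int.negSucc n * ξ) *
          (discreteFourier u t * exp (I * Int.negSucc n * t)) := by
    have hexp : exp (I * (ξ - t)) ^ (n + 1) =
        exp (-I * Int.negSucc n * ξ) * exp (I * Int.negSucc n * t) := by
      rw [← Complex.exp_nat_mul, ← Complex.exp_add, Int.cast_negSucc]
      push_cast
      ring_nf
    rw [mul_pow, hexp]
    ring
  have hsum := intervalIntegral.hasSum_integral_of_norm_le (a := -π) (b := π)
    (F := fun n t => discreteFourier u t * (r * exp (I * (ξ - t))) ^ (n + 1))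
    (c := fun n => (∑' k, ‖u k‖) * ‖r‖ ^ (n + 1))
    (fun n => (continuous_discreteFourier hu).mul (by fun_prop))
    (fun n t => by
      rw [norm_mul, norm_pow, hnorm]
      exact mul_le_mul_of_nonneg_right (norm_discreteFourier_le hu t) (by positivity))
    (((summable_nat_add_iff 1).mpr (summable_geometric_of_lt_one (norm_nonneg r) hr)).mul_left _)
    (fun t => (hasSum_pow_succ_of_norm_lt_one (w := r * exp (I * (ξ - t)))
      (by rw [hnorm]; exact hr)).mul_left _)
  simp only [hterm, intervalIntegral.integral_const_mul, integral_discreteFourier_mul_exp hu]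
    at hsum
  rw [← hsum.tsum_eq, ← tsum_mul_left]
  congr 1 with n
  ring

end discreteFourier

lemma tendsto_tsum_exp_neg_pow_succ_mul {f : ℕ → ℂ} (hf : Summable f) :
    Tendsto (fun τ : ℝ => ∑' n, (Real.exp (-τ) : ℂ) ^ (n + 1) * f n) (𝓝[>] 0)
      (𝓝 (∑' n, f n)) := by
  have habel := Complex.tendsto_tsum_powerSeries_nhdsWithin_lt hf.hasSum.tendsto_sum_nat
  have hexp : Tendsto (fun τ : ℝ => Real.exp (-τ)) (𝓝[>] 0) (𝓝[<] 1) := by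
    refine tendsto_nhdsWithin_iff.mpr ⟨?_, ?_⟩
    · simpa using ((by fun_prop : Continuous fun τ : ℝ => Real.exp (-τ)).tendsto 0).mono_left
        nhdsWithin_le_nhds
    · filter_upwards [self_mem_nhdsWithin] with τ (hτ : 0 < τ)
      exact Real.exp_lt_one_iff.mpr (neg_lt_zero.mpr hτ)
  have hz : Tendsto (fun τ : ℝ => (Real.exp (-τ) : ℂ)) (𝓝[>] 0) (𝓝 1) :=
    (continuous_ofReal.tendsto 1).comp (hexp.mono_right nhdsWithin_le_nhds)
  have := hz.mul (habel.comp (tendsto_map.comp hexp))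
  rw [one_mul] at this
  refine this.congr fun τ => ?_
  simp only [Function.comp_apply, ← tsum_mul_left]
  congr 1 with n
  ring

theorem sokhotskii_limit_Zminus (u : ℤ → ℂ)
    (hu : Summable fun k : ℤ => ‖u k‖) (ξ : ℝ) :
    Filter.Tendsto
      (fun τ : ℝ => (1 / (2 * (Real.pi : ℂ))) *
        ∫ t in (-Real.pi)..Real.pi, discreteFourier u t *
          ((1 - (Real.exp (-τ) : ℂ) * Complex.exp (Complex.I * ((ξ : ℂ) - (t : ℂ))))⁻¹ - 1))
      (nhdsWithin 0 (Set.Ioi 0))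
      (nhds (∑' k : {k : ℤ // k < 0},
        u k.1 * Complex.exp (-Complex.I * (k.1 : ℂ) * (ξ : ℂ)))) := by
  have hsummable : Summable fun n : ℕ => u (Int.negSucc n) * exp (-I * Int.negSucc n * ξ) :=
    .of_norm (by
      simpa [Complex.norm_exp, Function.comp_def] using
        hu.comp_injective fun _ _ => Int.negSucc.inj)
  rw [tsum_subtype_int_lt_zero fun k => u k * exp (-I * k * ξ)]
  refine (tendsto_tsum_exp_neg_pow_succ_mul hsummable).congr' ?_
  filter_upwards [self_mem_nhdsWithin] with τ (hτ : 0 < τ)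
  have hr : ‖(Real.exp (-τ) : ℂ)‖ < 1 := by
    rw [norm_real, Real.norm_of_nonneg (Real.exp_pos _).le]
    exact Real.exp_lt_one_iff.mpr (neg_lt_zero.mpr hτ)
  rw [integral_discreteFourier_mul_cauchyKernel hu _ hr ξ, one_div,
    inv_mul_cancel_left₀ (by simp [Real.pi_ne_zero])]
end
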